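/- arXiv:2501.05726 — 5 statements merged into one kernel-verified Lean document; each statement's English description precedes it below -/
import Mathlib

section
/- For every u ∈ V and v ∈ W, taking the test functions φ := 12u + Tu + v and ψ := 12u + Tu − 12v (the choice α = 2), the bilinear form satisfies a(u,v;φ,ψ) ≥ 2‖u‖² + ‖Tu‖² + ½‖v‖², and hence a(u,v;φ,ψ) ≥ ½(‖(u,v)‖_𝒱)² = ½(‖Tu‖² + ‖u‖² + ‖v‖²). -/
open RealInnerProductSpace

/-- Coercivity-type lower bound for the bilinear form
`a(u,v;φ,ψ) = ⟨Tu,φ⟩ + ⟨v,φ⟩ + m(v,φ) + ⟨u,ψ⟩ − m(v,ψ)`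
with test functions `φ = 12u + Tu + v`, `ψ = 12u + Tu − 12v` (the choice α = 2):
`a(u,v;φ,ψ) ≥ 2‖u‖² + ‖Tu‖² + ½‖v‖² ≥ ½(‖Tu‖² + ‖u‖² + ‖v‖²)`. -/
theorem stmt_1 {W : Type*} [NormedAddCommGroup W] [InnerProductSpace ℝ W]
    (V : Submodule ℝ W) (T : V →ₗ[ℝ] W)
    (hT1 : ∀ u : V, 0 ≤ ⟪T u, (u : W)⟫)
    (hT2 : ∀ u : V, ‖T u‖ ^ 2 ≤ 5 * ‖(u : W)‖ ^ 2)
    (m : W →ₗ[ℝ] W →ₗ[ℝ] ℝ)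
    (hmsym : ∀ x y : W, m x y = m y x)
    (hmpsd : ∀ x : W, 0 ≤ m x x)
    (u : V) (v : W) :
    2 * ‖(u : W)‖ ^ 2 + ‖T u‖ ^ 2 + (1 / 2) * ‖v‖ ^ 2 ≤
        ⟪T u, (12 : ℝ) • (u : W) + T u + v⟫ + ⟪v, (12 : ℝ) • (u : W) + T u + v⟫ +
          m v ((12 : ℝ) • (u : W) + T u + v) +
          ⟪(u : W), (12 : ℝ) • (u : W) + T u - (12 : ℝ) • v⟫ -
          m v ((12 : ℝ) • (u : W) + T u - (12 : ℝ) • v) ∧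
    (1 / 2) * (‖T u‖ ^ 2 + ‖(u : W)‖ ^ 2 + ‖v‖ ^ 2) ≤
        ⟪T u, (12 : ℝ) • (u : W) + T u + v⟫ + ⟪v, (12 : ℝ) • (u : W) + T u + v⟫ +
          m v ((12 : ℝ) • (u : W) + T u + v) +
          ⟪(u : W), (12 : ℝ) • (u : W) + T u - (12 : ℝ) • v⟫ -
          m v ((12 : ℝ) • (u : W) + T u - (12 : ℝ) • v) := by
  have h1 := hT1 u
  have h2 := hT2 u
  have h3 := hmpsd v
  have h4 : |⟪T u, v⟫| ≤ ‖T u‖ * ‖v‖ := abs_real_inner_le_norm _ _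
  have key : 2 * ‖(u : W)‖ ^ 2 + ‖T u‖ ^ 2 + (1 / 2) * ‖v‖ ^ 2 ≤
      ⟪T u, (12 : ℝ) • (u : W) + T u + v⟫ + ⟪v, (12 : ℝ) • (u : W) + T u + v⟫ +
        m v ((12 : ℝ) • (u : W) + T u + v) +
        ⟪(u : W), (12 : ℝ) • (u : W) + T u - (12 : ℝ) • v⟫ -
        m v ((12 : ℝ) • (u : W) + T u - (12 : ℝ) • v) := by
    simp only [inner_add_right, inner_sub_right, inner_smul_right, map_add, map_sub, map_smul,
      real_inner_self_eq_norm_sq, smul_eq_mul]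
    rw [abs_le] at h4
    nlinarith [sq_nonneg (2 * ‖T u‖ - ‖v‖), norm_nonneg (T u), norm_nonneg v,
      real_inner_comm v (T u), real_inner_comm ((u : W)) (T u), real_inner_comm v ((u : W))]
  constructor
  · exact key
  · nlinarith [key]
end

section
/- (Injectivity.) Assume in addition that m is positive definite (m(ψ,ψ) = 0 implies ψ = 0) and that for every ψ ∈ W there exists u_ψ ∈ V such that ⟨T u_ψ, χ⟩ = m(ψ, χ) for all χ ∈ W and ⟨u_ψ, ψ⟩ ≥ 0. If (φ,ψ) ∈ W × W satisfies a(u,v;φ,ψ) = 0 for all (u,v) ∈ V × W, then φ = 0 and ψ = 0. -/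
open RealInnerProductSpace

/-- Injectivity: if `m` is positive definite and every `ψ ∈ W` admits `u_ψ ∈ V` with
`⟨T u_ψ, χ⟩ = m(ψ,χ)` for all `χ` and `⟨u_ψ, ψ⟩ ≥ 0`, then `a(u,v;φ,ψ) = 0` for all
`(u,v) ∈ V × W` forces `φ = 0` and `ψ = 0`. -/
theorem stmt_3 {W : Type*} [NormedAddCommGroup W] [InnerProductSpace ℝ W]
    (V : Submodule ℝ W) (T : V →ₗ[ℝ] W)
    (hT1 : ∀ u : V, 0 ≤ ⟪T u, (u : W)⟫)
    (hT2 : ∀ u : V, ‖T u‖ ^ 2 ≤ 5 * ‖(u : W)‖ ^ 2)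
    (m : W →ₗ[ℝ] W →ₗ[ℝ] ℝ)
    (hmsym : ∀ x y : W, m x y = m y x)
    (hmpsd : ∀ x : W, 0 ≤ m x x)
    (hmdef : ∀ ψ : W, m ψ ψ = 0 → ψ = 0)
    (hlift : ∀ ψ : W, ∃ uψ : V,
      (∀ χ : W, ⟪T uψ, χ⟫ = m ψ χ) ∧ 0 ≤ ⟪(uψ : W), ψ⟫)
    (φ ψ : W)
    (h : ∀ (u : V) (v : W),
      ⟪T u, φ⟫ + ⟪v, φ⟫ + m v φ + ⟪(u : W), ψ⟫ - m v ψ = 0) :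
    φ = 0 ∧ ψ = 0 := by
  obtain ⟨u0, hu0, hu0'⟩ := hlift ψ
  -- equation with u = u0, v = φ
  have h1 := h u0 φ
  rw [hu0 φ] at h1
  -- equation with u = 0, v : arbitrary
  have h0 : ∀ v : W, ⟪v, φ⟫ + m v φ - m v ψ = 0 := by
    intro v
    have := h 0 v
    simpa using this
  have hφ1 := h0 φ
  -- from h1: m ψ φ + ⟪φ,φ⟫ + m φ φ + ⟪u0,ψ⟫ - m φ ψ = 0
  have hsym : m ψ φ = m φ ψ := hmsym ψ φ
  have hφφ : ⟪φ, φ⟫ + m φ φ + ⟪(u0 : W), ψ⟫ = 0 := by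
    have := hφ1
    nlinarith [h1, hsym]
  have hφ0 : φ = 0 := by
    have hn : (0:ℝ) ≤ ⟪φ, φ⟫ := real_inner_self_nonneg
    have : ⟪φ, φ⟫ = 0 := by nlinarith [hmpsd φ, hu0']
    exact inner_self_eq_zero.mp this
  subst hφ0
  refine ⟨rfl, ?_⟩
  have := h0 ψ
  simp at this
  exact hmdef ψ (by linarith [hmsym ψ ψ])
end

section
/- (Well-posedness of the continuous space–time formulation.) Assume in addition that W is complete (a real Hilbert space), that V equipped with the norm ‖u‖_V := √(‖Tu‖² + ‖u‖²) is complete (i.e. T is a closed operator), that m is bounded (|m(v,w)| ≤ M‖v‖‖w‖ for some M ≥ 0) and positive definite (m(ψ,ψ)=0 implies ψ=0), and that for every ψ ∈ W there exists u_ψ ∈ V with ⟨T u_ψ, χ⟩ = m(ψ, χ) for all χ ∈ W and ⟨u_ψ, ψ⟩ ≥ 0. Then for every bounded linear functional g : W → ℝ there exists a unique pair (u,v) ∈ V × W such that a(u,v;φ,ψ) = g(φ) for all (φ,ψ) ∈ W × W, and it satisfies the stability bound ‖(u,v)‖_𝒱 ≤ (1/C_s)·‖g‖_{W*} with C_s =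 1/(48√2). -/
/-!
Let `A` be the positive operator representing `m` and `G` the Riesz representative of `g`.
The solutions are exactly the preimages of `(G, 0)` under
`B (u, v) = (T u + v + A v, u - A v)`, where `W × W` carries the `L²` inner product, so that
`⟪B (u, v), (φ, ψ)⟫ = a(u, v; φ, ψ)`.
Pairing the two residuals `a = T u + v + A v`, `b = u - A v` with `u` and `v + A v` gives
`⟪T u, u⟫ + ⟪A v, v⟫ + ‖A v‖² = ⟪a, u⟫ - ⟪b, v + A v⟫`, which together with `‖T u‖ ≤ √5 ‖u‖`
controls `‖A v‖`, hence `‖(u, v)‖`, by the residuals: `B` is bounded below.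
A bounded operator with closed graph has closed domain, so `V` is complete and `B` has closed
range. Testing with `(0, v)` shows `φ + A φ = A ψ` for any `(φ, ψ)` orthogonal to the range, and
testing with the lift `(u_ψ, 0)` then forces `φ = 0` and `A ψ = 0`, so the range is everything.
-/

open RealInnerProductSpace Filter Topology
open scoped NNReal

theorem ContinuousLinearMap.surjective_of_antilipschitz_of_inner_eq_zero
    {𝕜 E F : Type*} [RCLike 𝕜] [NormedAddCommGroup E] [NormedSpace 𝕜 E] [CompleteSpace E]
    [NormedAddCommGroup F] [InnerProductSpace 𝕜 F] (B : E →L[𝕜] F) {K : ℝ≥0}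
    (hB : AntilipschitzWith K B) (hB' : ∀ y, (∀ x, inner 𝕜 (B x) y = 0) → y = 0) :
    Function.Surjective B := by
  have hcomplete : IsComplete ((B : E →ₗ[𝕜] F).range : Set F) := by
    rw [LinearMap.coe_range]
    exact hB.isComplete_range B.uniformContinuous
  have := hcomplete.completeSpace_coe
  refine LinearMap.range_eq_top.mp ?_
  rw [← Submodule.orthogonal_eq_bot_iff, Submodule.eq_bot_iff]
  intro y hy
  exact hB' y fun x => (Submodule.mem_orthogonal _ y).mp hy _ (LinearMap.mem_range_self _ x)

theorem Submodule.isClosed_of_closed_graph {𝕜 E F : Type*} [NontriviallyNormedField 𝕜]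
    [NormedAddCommGroup E] [NormedSpace 𝕜 E] [NormedAddCommGroup F] [NormedSpace 𝕜 F]
    [CompleteSpace F] {V : Submodule 𝕜 E} (T : V →L[𝕜] F)
    (hT : ∀ (s : ℕ → V) (x : E) (y : F), Tendsto (fun n => (s n : E)) atTop (𝓝 x) →
      Tendsto (fun n => T (s n)) atTop (𝓝 y) → x ∈ V) :
    IsClosed (V : Set E) := by
  refine IsSeqClosed.isClosed fun s x hs hx => ?_
  lift s to ℕ → V using hs
  have hs : CauchySeq s := by
    have hx' := Metric.cauchySeq_iff'.mp hx.cauchySeq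
    exact Metric.cauchySeq_iff'.mpr hx'
  obtain ⟨y, hy⟩ := cauchySeq_tendsto_of_complete (T.uniformContinuous.comp_cauchySeq hs)
  exact hT s x y hx hy

section MixedOperator

variable {W : Type*} [NormedAddCommGroup W] [InnerProductSpace ℝ W] {V : Submodule ℝ W}

def mixedOperator (T : V →L[ℝ] W) (A : W →L[ℝ] W) : V × W →L[ℝ] WithLp 2 (W × W) :=
  (WithLp.prodContinuousLinearEquiv 2 ℝ W W).symm.toContinuousLinearMap ∘L
    ((T ∘L .fst ℝ V W + .snd ℝ V W + A ∘L .snd ℝ V W).prod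
      (V.subtypeL ∘L .fst ℝ V W - A ∘L .snd ℝ V W))

variable (T : V →L[ℝ] W) (A : W →L[ℝ] W)

theorem mixedOperator_apply (p : V × W) :
    mixedOperator T A p = WithLp.toLp 2 (T p.1 + p.2 + A p.2, (p.1 : W) - A p.2) :=
  rfl

theorem inner_mixedOperator_toLp (p : V × W) (φ ψ : W) :
    ⟪mixedOperator T A p, WithLp.toLp 2 (φ, ψ)⟫ =
      ⟪T p.1, φ⟫ + ⟪p.2, φ⟫ + ⟪A p.2, φ⟫ + ⟪(p.1 : W), ψ⟫ - ⟪A p.2, ψ⟫ := by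
  simp only [mixedOperator_apply, WithLp.prod_inner_apply, inner_add_left, inner_sub_left]
  ring

variable {T A}

theorem norm_le_of_norm_mixed_le (hT₁ : ∀ u : V, 0 ≤ ⟪T u, (u : W)⟫)
    (hT₂ : ∀ u : V, ‖T u‖ ^ 2 ≤ 5 * ‖(u : W)‖ ^ 2) (hA : ∀ v, 0 ≤ ⟪A v, v⟫) {u : V} {v : W}
    {t : ℝ} (ha : ‖T u + v + A v‖ ≤ t) (hb : ‖(u : W) - A v‖ ≤ t) :
    ‖(u : W)‖ ≤ 6 * t ∧ ‖T u‖ ≤ 14 * t ∧ ‖v‖ ≤ 20 * t := by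
  set a := T u + v + A v
  set b := (u : W) - A v
  set r := ‖A v‖
  have ht : 0 ≤ t := (norm_nonneg a).trans ha
  have hu : ‖(u : W)‖ ≤ t + r := by
    calc ‖(u : W)‖ = ‖b + A v‖ := by rw [sub_add_cancel]
      _ ≤ t + r := (norm_add_le _ _).trans (by gcongr)
  have hTu : ‖T u‖ ≤ 9 / 4 * (t + r) := by
    have : ‖T u‖ ≤ 9 / 4 * ‖(u : W)‖ := by
      nlinarith [hT₂ u, norm_nonneg (T u), norm_nonneg (u : W)]
    linarith
  have hidentity : ⟪T u, (u : W)⟫ + ⟪A v, v⟫ + r ^ 2 = ⟪a, (u : W)⟫ - ⟪b, a - T u⟫ := by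
    rw [← real_inner_self_eq_norm_sq]
    simp only [a, b, inner_add_left, inner_add_right, inner_sub_left, inner_sub_right]
    linear_combination real_inner_comm v (u : W) + real_inner_comm (A v) (u : W)
  have hr : r ≤ 5 * t := by
    have h₁ : ⟪a, (u : W)⟫ ≤ t * (t + r) :=
      (real_inner_le_norm _ _).trans (mul_le_mul ha hu (norm_nonneg _) ht)
    have h₂ : -⟪b, a - T u⟫ ≤ t * (t + 9 / 4 * (t + r)) :=
      (neg_le_abs _).trans <| (abs_real_inner_le_norm _ _).trans <|
        mul_le_mul hb ((norm_sub_le _ _).trans (add_le_add ha hTu)) (norm_nonneg _) ht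
    nlinarith [hT₁ u, hA v, norm_nonneg (A v)]
  refine ⟨by linarith, by linarith, ?_⟩
  calc ‖v‖ = ‖a - T u - A v‖ := by congr 1; simp only [a]; abel
    _ ≤ ‖a‖ + ‖T u‖ + r := (norm_sub_le _ _).trans (by gcongr; exact norm_sub_le _ _)
    _ ≤ 20 * t := by linarith

theorem sqrt_norm_sq_add_le_of_norm_mixed_le (hT₁ : ∀ u : V, 0 ≤ ⟪T u, (u : W)⟫)
    (hT₂ : ∀ u : V, ‖T u‖ ^ 2 ≤ 5 * ‖(u : W)‖ ^ 2) (hA : ∀ v, 0 ≤ ⟪A v, v⟫) {u : V} {v : W}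
    {t : ℝ} (ha : ‖T u + v + A v‖ ≤ t) (hb : ‖(u : W) - A v‖ ≤ t) :
    √(‖T u‖ ^ 2 + ‖(u : W)‖ ^ 2 + ‖v‖ ^ 2) ≤ 48 * √2 * t := by
  obtain ⟨hu, hTu, hv⟩ := norm_le_of_norm_mixed_le hT₁ hT₂ hA ha hb
  have ht : 0 ≤ t := (norm_nonneg _).trans ha
  calc √(‖T u‖ ^ 2 + ‖(u : W)‖ ^ 2 + ‖v‖ ^ 2) ≤ √((26 * t) ^ 2) := by
        gcongr
        nlinarith [norm_nonneg (T u), norm_nonneg (u : W), norm_nonneg v]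
    _ = 26 * t := Real.sqrt_sq (by positivity)
    _ ≤ 48 * √2 * t := by
        gcongr
        nlinarith [Real.one_le_sqrt.mpr one_le_two]

theorem mixedOperator_antilipschitz (hT₁ : ∀ u : V, 0 ≤ ⟪T u, (u : W)⟫)
    (hT₂ : ∀ u : V, ‖T u‖ ^ 2 ≤ 5 * ‖(u : W)‖ ^ 2) (hA : ∀ v, 0 ≤ ⟪A v, v⟫) :
    AntilipschitzWith 20 (mixedOperator T A) := by
  refine (mixedOperator T A).antilipschitz_of_bound fun p => ?_
  obtain ⟨hu, -, hv⟩ := norm_le_of_norm_mixed_le (u := p.1) (v := p.2) hT₁ hT₂ hA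
    (WithLp.norm_fst_le _ (mixedOperator T A p)) (WithLp.norm_snd_le _ (mixedOperator T A p))
  rw [Prod.norm_def, Submodule.coe_norm, NNReal.coe_ofNat]
  have := norm_nonneg (mixedOperator T A p)
  exact max_le (by linarith) (by linarith)

theorem eq_zero_of_forall_inner_mixedOperator_eq_zero (hA : A.IsPositive)
    (hA₀ : ∀ v, ⟪A v, v⟫ = 0 → v = 0) (hlift : ∀ ψ, ∃ u : V, T u = A ψ ∧ 0 ≤ ⟪(u : W), ψ⟫)
    {y : WithLp 2 (W × W)} (hy : ∀ p, ⟪mixedOperator T A p, y⟫ = 0) : y = 0 := by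
  obtain ⟨φ, ψ⟩ := y
  simp only [inner_mixedOperator_toLp] at hy
  obtain ⟨u, hTu, hu⟩ := hlift ψ
  have hφ : φ = 0 := by
    have h₁ := hy (u, 0)
    have h₂ := hy (0, φ)
    simp only [map_zero, inner_zero_left, add_zero, sub_zero, ZeroMemClass.coe_zero,
      zero_add] at h₁ h₂
    rw [hTu, hA.inner_left_eq_inner_right, real_inner_comm] at h₁
    have hAφ : 0 ≤ ⟪A φ, φ⟫ := hA.toLinearMap.inner_nonneg_left φ
    have : ⟪φ, φ⟫ ≤ 0 := by linarith
    exact inner_self_eq_zero.mp (le_antisymm this real_inner_self_nonneg)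
  have hψ : ψ = 0 := hA₀ ψ <| by simpa [hφ] using hy (0, ψ)
  simp [hφ, hψ]

theorem mixedOperator_bijective [CompleteSpace W] [CompleteSpace V]
    (hT₁ : ∀ u : V, 0 ≤ ⟪T u, (u : W)⟫) (hT₂ : ∀ u : V, ‖T u‖ ^ 2 ≤ 5 * ‖(u : W)‖ ^ 2)
    (hA : A.IsPositive) (hA₀ : ∀ v, ⟪A v, v⟫ = 0 → v = 0)
    (hlift : ∀ ψ, ∃ u : V, T u = A ψ ∧ 0 ≤ ⟪(u : W), ψ⟫) :
    Function.Bijective (mixedOperator T A) :=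
  have hB := mixedOperator_antilipschitz hT₁ hT₂ hA.toLinearMap.inner_nonneg_left
  ⟨hB.injective, (mixedOperator T A).surjective_of_antilipschitz_of_inner_eq_zero hB
    fun _ => eq_zero_of_forall_inner_mixedOperator_eq_zero hA hA₀ hlift⟩

theorem mixedOperator_eq_toLp_iff {p : V × W} {G : W} :
    mixedOperator T A p = WithLp.toLp 2 (G, 0) ↔ ∀ φ ψ : W,
      ⟪T p.1, φ⟫ + ⟪p.2, φ⟫ + ⟪A p.2, φ⟫ + ⟪(p.1 : W), ψ⟫ - ⟪A p.2, ψ⟫ = ⟪G, φ⟫ := by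
  simp_rw [← inner_mixedOperator_toLp]
  refine ⟨fun h φ ψ => by simp [h], fun h => ext_inner_right ℝ fun y => ?_⟩
  obtain ⟨φ, ψ⟩ := y
  simpa using h φ ψ

end MixedOperator

theorem exists_isPositive_inner_eq {W : Type*} [NormedAddCommGroup W] [InnerProductSpace ℝ W]
    [CompleteSpace W] (m : W →ₗ[ℝ] W →ₗ[ℝ] ℝ) (hsymm : ∀ x y, m x y = m y x)
    (hnonneg : ∀ x, 0 ≤ m x x) {M : ℝ} (hbdd : ∀ x y, |m x y| ≤ M * ‖x‖ * ‖y‖) :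
    ∃ A : W →L[ℝ] W, A.IsPositive ∧ ∀ v w, ⟪A v, w⟫ = m v w := by
  set A := InnerProductSpace.continuousLinearMapOfBilin (m.mkContinuous₂ M hbdd)
  have hA : ∀ v w, ⟪A v, w⟫ = m v w := by simp [A]
  refine ⟨A, ⟨fun v w => ?_, fun v => ?_⟩, hA⟩
  · change ⟪A v, w⟫ = ⟪v, A w⟫
    rw [real_inner_comm (A w) v, hA, hA, hsymm]
  · simpa [ContinuousLinearMap.reApplyInnerSelf_apply, hA] using hnonneg v

theorem stmt_5_general {W : Type*} [NormedAddCommGroup W] [InnerProductSpace ℝ W]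
    [CompleteSpace W]
    (V : Submodule ℝ W) (T : V →ₗ[ℝ] W)
    (hT1 : ∀ u : V, 0 ≤ ⟪T u, (u : W)⟫)
    (hT2 : ∀ u : V, ‖T u‖ ^ 2 ≤ 5 * ‖(u : W)‖ ^ 2)
    (hclosed : ∀ (s : ℕ → V) (x y : W),
      Filter.Tendsto (fun n => ((s n : W))) Filter.atTop (nhds x) →
      Filter.Tendsto (fun n => T (s n)) Filter.atTop (nhds y) →
      ∃ hx : x ∈ V, T ⟨x, hx⟩ = y)
    (m : W →ₗ[ℝ] W →ₗ[ℝ] ℝ)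
    (hmsym : ∀ x y : W, m x y = m y x)
    (hmpsd : ∀ x : W, 0 ≤ m x x)
    (M : ℝ)
    (hmbdd : ∀ x y : W, |m x y| ≤ M * ‖x‖ * ‖y‖)
    (hmdef : ∀ ψ : W, m ψ ψ = 0 → ψ = 0)
    (hlift : ∀ ψ : W, ∃ uψ : V,
      (∀ χ : W, ⟪T uψ, χ⟫ = m ψ χ) ∧ 0 ≤ ⟪(uψ : W), ψ⟫)
    (g : W →L[ℝ] ℝ) :
    (∃! p : V × W, ∀ φ ψ : W,
      ⟪T p.1, φ⟫ + ⟪p.2, φ⟫ + m p.2 φ + ⟪(p.1 : W), ψ⟫ - m p.2 ψ = g φ) ∧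
    ∀ p : V × W,
      (∀ φ ψ : W,
        ⟪T p.1, φ⟫ + ⟪p.2, φ⟫ + m p.2 φ + ⟪(p.1 : W), ψ⟫ - m p.2 ψ = g φ) →
      Real.sqrt (‖T p.1‖ ^ 2 + ‖(p.1 : W)‖ ^ 2 + ‖p.2‖ ^ 2) ≤
        (48 * Real.sqrt 2) * ‖g‖ := by
  obtain ⟨A, hA, hAm⟩ := exists_isPositive_inner_eq m hmsym hmpsd hmbdd
  let T' : V →L[ℝ] W := T.mkContinuous (9 / 4) fun u => by
    rw [Submodule.coe_norm]
    nlinarith [hT2 u, norm_nonneg (T u), norm_nonneg (u : W)]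
  have : CompleteSpace V :=
    (V.isClosed_of_closed_graph T' fun s x y hx hy => (hclosed s x y hx hy).1).completeSpace_coe
  set G := (InnerProductSpace.toDual ℝ W).symm g
  have hsolution : ∀ p : V × W, (∀ φ ψ : W,
      ⟪T p.1, φ⟫ + ⟪p.2, φ⟫ + m p.2 φ + ⟪(p.1 : W), ψ⟫ - m p.2 ψ = g φ) ↔
      mixedOperator T' A p = WithLp.toLp 2 (G, 0) := fun p => by
    simp only [mixedOperator_eq_toLp_iff, hAm, G, InnerProductSpace.toDual_symm_apply]
    rfl
  have hB := mixedOperator_bijective (T := T') hT1 hT2 hA (fun v hv => hmdef v (hAm v v ▸ hv))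
    fun ψ => (hlift ψ).imp fun u hu => ⟨ext_inner_right ℝ fun χ => by simp [T', hu.1, hAm], hu.2⟩
  refine ⟨by simpa only [hsolution] using hB.existsUnique _, fun p hp => ?_⟩
  have hBp := (hsolution p).mp hp
  refine sqrt_norm_sq_add_le_of_norm_mixed_le (T := T') (u := p.1) hT1 hT2
    hA.toLinearMap.inner_nonneg_left ?_ ?_
  · rw [show T' p.1 + p.2 + A p.2 = G from congrArg WithLp.fst hBp, LinearIsometryEquiv.norm_map]
  · rw [show (p.1 : W) - A p.2 = 0 from congrArg WithLp.snd hBp, norm_zero]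
    positivity

/-- Well-posedness of the continuous space–time formulation: under completeness of `W`,
closedness of `T`, boundedness and positive definiteness of `m`, and the lifting
property, for every bounded linear functional `g` on `W` there is a unique pair
`(u,v) ∈ V × W` with `a(u,v;φ,ψ) = g(φ)` for all `(φ,ψ)`, satisfying the stability
bound `‖(u,v)‖_𝒱 ≤ (1/C_s)‖g‖` with `C_s = 1/(48√2)`. -/
theorem stmt_5 {W : Type*} [NormedAddCommGroup W] [InnerProductSpace ℝ W]
    [CompleteSpace W]
    (V : Submodule ℝ W) (T : V →ₗ[ℝ] W)
    (hT1 : ∀ u : V, 0 ≤ ⟪T u, (u : W)⟫)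
    (hT2 : ∀ u : V, ‖T u‖ ^ 2 ≤ 5 * ‖(u : W)‖ ^ 2)
    (hclosed : ∀ (s : ℕ → V) (x y : W),
      Filter.Tendsto (fun n => ((s n : W))) Filter.atTop (nhds x) →
      Filter.Tendsto (fun n => T (s n)) Filter.atTop (nhds y) →
      ∃ hx : x ∈ V, T ⟨x, hx⟩ = y)
    (m : W →ₗ[ℝ] W →ₗ[ℝ] ℝ)
    (hmsym : ∀ x y : W, m x y = m y x)
    (hmpsd : ∀ x : W, 0 ≤ m x x)
    (M : ℝ) (hM : 0 ≤ M)
    (hmbdd : ∀ x y : W, |m x y| ≤ M * ‖x‖ * ‖y‖)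
    (hmdef : ∀ ψ : W, m ψ ψ = 0 → ψ = 0)
    (hlift : ∀ ψ : W, ∃ uψ : V,
      (∀ χ : W, ⟪T uψ, χ⟫ = m ψ χ) ∧ 0 ≤ ⟪(uψ : W), ψ⟫)
    (g : W →L[ℝ] ℝ) :
    (∃! p : V × W, ∀ φ ψ : W,
      ⟪T p.1, φ⟫ + ⟪p.2, φ⟫ + m p.2 φ + ⟪(p.1 : W), ψ⟫ - m p.2 ψ = g φ) ∧
    ∀ p : V × W,
      (∀ φ ψ : W,
        ⟪T p.1, φ⟫ + ⟪p.2, φ⟫ + m p.2 φ + ⟪(p.1 : W), ψ⟫ - m p.2 ψ = g φ) →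
      Real.sqrt (‖T p.1‖ ^ 2 + ‖(p.1 : W)‖ ^ 2 + ‖p.2‖ ^ 2) ≤
        (48 * Real.sqrt 2) * ‖g‖ :=
  stmt_5_general V T hT1 hT2 hclosed m hmsym hmpsd M hmbdd hmdef hlift g
end

section
/- (Unique solvability of the discrete scheme.) For every bounded linear functional g : W → ℝ there exists a unique pair (u_h, v_h) ∈ W_h × W_h such that a(u_h, v_h; φ_h, ψ_h) = g(φ_h) for all (φ_h, ψ_h) ∈ W_h × W_h, and it satisfies ‖(u_h, v_h)‖_{𝒱_h} ≤ (1/C_s)·‖g‖_{W*} with C_s = 1/(48√2). -/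
/-!
Testing the second equation with `ψ = v` and `ψ = u` turns `⟪v, u⟫` and `m(v, u)` into `m(v, v) ≥ 0`
and `‖u‖²`, so testing the first equation with `φ = u` and using `⟪T u, u⟫ ≥ 0` gives `‖u‖ ≤ ‖g‖`.
Testing it with `φ = v` then gives `‖v‖ ≤ ‖g‖ + ‖T u‖`, and `‖T_h u‖ ≤ ‖T u‖ ≤ 3 ‖u‖` since `T_h`
is a projection of `T`; altogether `‖(u, v)‖_{𝒱_h} ≤ √26 ‖g‖`. For `g = 0` these bounds force
`(u, v) = 0`, so the square system on the finite-dimensional space `W_h × W_h` is injective, hence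
uniquely solvable.
-/

open RealInnerProductSpace

lemma le_of_sq_le_mul {a b : ℝ} (hb : 0 ≤ b) (h : a ^ 2 ≤ b * a) : a ≤ b := by
  nlinarith

theorem LinearMap.existsUnique_apply_eq_of_injective {K E : Type*} [Field K] [AddCommGroup E]
    [Module K E] [FiniteDimensional K E] (B : E →ₗ[K] Module.Dual K E)
    (hB : Function.Injective B) (G : Module.Dual K E) : ∃! p, B p = G :=
  (B.linearEquivOfInjective hB Subspace.dual_finrank_eq.symm).bijective.existsUnique G

section

variable {W : Type*} [NormedAddCommGroup W] [InnerProductSpace ℝ W] {Wh : Submodule ℝ W}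

lemma Submodule.norm_coe_le_of_inner_eq {x : Wh} {y : W}
    (h : ∀ φ : Wh, ⟪(x : W), φ⟫ = ⟪y, φ⟫) : ‖(x : W)‖ ≤ ‖y‖ := by
  refine le_of_sq_le_mul (norm_nonneg _) ?_
  calc ‖(x : W)‖ ^ 2 = ⟪y, x⟫ := by rw [← h, real_inner_self_eq_norm_sq]
    _ ≤ ‖y‖ * ‖(x : W)‖ := real_inner_le_norm _ _

variable (A : Wh →ₗ[ℝ] W) (m : W →ₗ[ℝ] W →ₗ[ℝ] ℝ)

namespace DiscreteScheme

noncomputable def form : (Wh × Wh) →ₗ[ℝ] Module.Dual ℝ (Wh × Wh) :=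
  LinearMap.mk₂ ℝ (fun p q : Wh × Wh =>
    ⟪A p.1, q.1⟫ + ⟪(p.2 : W), q.1⟫ + m p.2 q.1 + ⟪(p.1 : W), q.2⟫ - m p.2 q.2)
    (fun p p' q => by
      simp only [Prod.fst_add, Prod.snd_add, Submodule.coe_add, map_add, LinearMap.add_apply,
        inner_add_left]
      ring)
    (fun c p q => by
      simp only [Prod.smul_fst, Prod.smul_snd, Submodule.coe_smul, map_smul,
        LinearMap.smul_apply, real_inner_smul_left, smul_eq_mul]
      ring)
    (fun p q q' => by
      simp only [Prod.fst_add, Prod.snd_add, Submodule.coe_add, map_add, inner_add_right]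
      ring)
    (fun c p q => by
      simp only [Prod.smul_fst, Prod.smul_snd, Submodule.coe_smul, map_smul,
        real_inner_smul_right, smul_eq_mul]
      ring)

lemma form_eq_iff (p : Wh × Wh) (g : W →L[ℝ] ℝ) :
    form A m p = g.toLinearMap ∘ₗ Wh.subtype ∘ₗ LinearMap.fst ℝ Wh Wh ↔
      ∀ φ ψ : Wh, ⟪A p.1, φ⟫ + ⟪(p.2 : W), φ⟫ + m p.2 φ + ⟪(p.1 : W), ψ⟫ - m p.2 ψ = g φ :=
  ⟨fun h φ ψ => LinearMap.congr_fun h (φ, ψ), fun h => LinearMap.ext fun q => h q.1 q.2⟩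

lemma solves_iff (u v : Wh) (g : W →L[ℝ] ℝ) :
    (∀ φ ψ : Wh, ⟪A u, φ⟫ + ⟪(v : W), φ⟫ + m v φ + ⟪(u : W), ψ⟫ - m v ψ = g φ) ↔
      (∀ φ : Wh, ⟪A u, φ⟫ + ⟪(v : W), φ⟫ + m v φ = g φ) ∧ ∀ ψ : Wh, m v ψ = ⟪(u : W), ψ⟫ := by
  constructor
  · intro h
    refine ⟨fun φ => by simpa using h φ 0, fun ψ => ?_⟩
    have h₀ := h 0 ψ
    simp only [Submodule.coe_zero, inner_zero_right, map_zero, zero_add] at h₀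
    linarith
  · rintro ⟨h₁, h₂⟩ φ ψ
    linarith [h₁ φ, h₂ ψ]

variable {A m}

lemma norm_fst_le (hA : ∀ u : Wh, 0 ≤ ⟪A u, u⟫) (hm : ∀ x : W, 0 ≤ m x x) {u v : Wh}
    {g : W →L[ℝ] ℝ} (h₁ : ∀ φ : Wh, ⟪A u, φ⟫ + ⟪(v : W), φ⟫ + m v φ = g φ)
    (h₂ : ∀ ψ : Wh, m v ψ = ⟪(u : W), ψ⟫) : ‖(u : W)‖ ≤ ‖g‖ := by
  refine le_of_sq_le_mul (norm_nonneg g) ?_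
  have hvu : ⟪(v : W), u⟫ = m v v := by rw [real_inner_comm, h₂]
  calc ‖(u : W)‖ ^ 2 = g u - ⟪A u, u⟫ - m v v := by
        rw [← real_inner_self_eq_norm_sq, ← h₂, ← hvu, ← h₁]; ring
    _ ≤ g u := by linarith [hA u, hm v]
    _ ≤ ‖g‖ * ‖(u : W)‖ := (Real.le_norm_self _).trans (g.le_opNorm _)

lemma norm_snd_le (hm : ∀ x : W, 0 ≤ m x x) {u v : Wh} {g : W →L[ℝ] ℝ}
    (h₁ : ∀ φ : Wh, ⟪A u, φ⟫ + ⟪(v : W), φ⟫ + m v φ = g φ) :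
    ‖(v : W)‖ ≤ ‖g‖ + ‖A u‖ := by
  refine le_of_sq_le_mul (by positivity) ?_
  calc ‖(v : W)‖ ^ 2 = g v - ⟪A u, v⟫ - m v v := by
        rw [← real_inner_self_eq_norm_sq, ← h₁]; ring
    _ ≤ g v - ⟪A u, v⟫ := by linarith [hm v]
    _ ≤ ‖g‖ * ‖(v : W)‖ + ‖A u‖ * ‖(v : W)‖ := by
        linarith [(Real.le_norm_self _).trans (g.le_opNorm v),
          neg_le_of_abs_le (abs_real_inner_le_norm (A u) v)]
    _ = (‖g‖ + ‖A u‖) * ‖(v : W)‖ := by ring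

lemma form_injective (hA : ∀ u : Wh, 0 ≤ ⟪A u, u⟫) (hm : ∀ x : W, 0 ≤ m x x) :
    Function.Injective (form A m) := by
  refine (injective_iff_map_eq_zero _).mpr fun ⟨u, v⟩ hp => ?_
  obtain ⟨h₁, h₂⟩ := (solves_iff A m u v 0).mp ((form_eq_iff A m _ 0).mp hp)
  have hu : u = 0 := by simpa using norm_fst_le hA hm h₁ h₂
  subst hu
  simpa using norm_snd_le hm h₁

end DiscreteScheme
end
theorem stmt_8_general {W : Type*} [NormedAddCommGroup W] [InnerProductSpace ℝ W]
    (V : Submodule ℝ W) (T : V →ₗ[ℝ] W)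
    (hT1 : ∀ u : V, 0 ≤ ⟪T u, (u : W)⟫)
    (hT2 : ∀ u : V, ‖T u‖ ^ 2 ≤ 5 * ‖(u : W)‖ ^ 2)
    (m : W →ₗ[ℝ] W →ₗ[ℝ] ℝ)
    (hmpsd : ∀ x : W, 0 ≤ m x x)
    (Wh : Submodule ℝ W) [FiniteDimensional ℝ Wh] (hWhV : Wh ≤ V)
    (Th : Wh →ₗ[ℝ] Wh)
    (hTh : ∀ (u φ : Wh),
      ⟪((Th u : Wh) : W), (φ : W)⟫ = ⟪T ⟨(u : W), hWhV u.2⟩, (φ : W)⟫)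
    (g : W →L[ℝ] ℝ) :
    (∃! p : Wh × Wh, ∀ φh ψh : Wh,
      ⟪T ⟨(p.1 : W), hWhV p.1.2⟩, (φh : W)⟫ + ⟪(p.2 : W), (φh : W)⟫ +
        m (p.2 : W) (φh : W) + ⟪(p.1 : W), (ψh : W)⟫ - m (p.2 : W) (ψh : W) =
        g (φh : W)) ∧
    ∀ p : Wh × Wh,
      (∀ φh ψh : Wh,
        ⟪T ⟨(p.1 : W), hWhV p.1.2⟩, (φh : W)⟫ + ⟪(p.2 : W), (φh : W)⟫ +
          m (p.2 : W) (φh : W) + ⟪(p.1 : W), (ψh : W)⟫ - m (p.2 : W) (ψh : W) =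
          g (φh : W)) →
      Real.sqrt (‖Th p.1‖ ^ 2 + ‖(p.1 : W)‖ ^ 2 + ‖(p.2 : W)‖ ^ 2) ≤
        (48 * Real.sqrt 2) * ‖g‖ := by
  set A : Wh →ₗ[ℝ] W := T ∘ₗ Submodule.inclusion hWhV
  have hA : ∀ u : Wh, 0 ≤ ⟪A u, u⟫ := fun u => hT1 _
  have hA_le : ∀ u : Wh, ‖A u‖ ≤ 3 * ‖(u : W)‖ := fun u => by
    have h : ‖A u‖ ^ 2 ≤ 5 * ‖(u : W)‖ ^ 2 := hT2 _
    exact (pow_le_pow_iff_left₀ (norm_nonneg _) (by positivity) two_ne_zero).mp (by nlinarith)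
  refine ⟨?_, fun ⟨u, v⟩ hp => ?_⟩
  · have h := LinearMap.existsUnique_apply_eq_of_injective _
      (DiscreteScheme.form_injective hA hmpsd) (g.toLinearMap ∘ₗ Wh.subtype ∘ₗ LinearMap.fst ℝ Wh Wh)
    simp only [DiscreteScheme.form_eq_iff] at h
    exact h
  obtain ⟨h₁, h₂⟩ := (DiscreteScheme.solves_iff A m u v g).mp hp
  have hu := DiscreteScheme.norm_fst_le hA hmpsd h₁ h₂
  have hv := DiscreteScheme.norm_snd_le hmpsd h₁
  have hThu : ‖Th u‖ ≤ ‖A u‖ := Submodule.norm_coe_le_of_inner_eq (hTh u)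
  have hAu := hA_le u
  rw [Real.sqrt_le_iff, mul_pow, mul_pow, Real.sq_sqrt zero_le_two]
  refine ⟨by positivity, ?_⟩
  nlinarith [norm_nonneg (A u), norm_nonneg (Th u), norm_nonneg (u : W), norm_nonneg (v : W)]

/-- Unique solvability of the discrete scheme: for every bounded linear functional `g`
on `W` there is a unique pair `(u_h,v_h) ∈ W_h × W_h` with
`a(u_h,v_h;φ_h,ψ_h) = g(φ_h)` for all discrete test functions, satisfying
`‖(u_h,v_h)‖_{𝒱_h} ≤ (1/C_s)‖g‖` with `C_s = 1/(48√2)`. -/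
theorem stmt_8 {W : Type*} [NormedAddCommGroup W] [InnerProductSpace ℝ W]
    [CompleteSpace W]
    (V : Submodule ℝ W) (T : V →ₗ[ℝ] W)
    (hT1 : ∀ u : V, 0 ≤ ⟪T u, (u : W)⟫)
    (hT2 : ∀ u : V, ‖T u‖ ^ 2 ≤ 5 * ‖(u : W)‖ ^ 2)
    (m : W →ₗ[ℝ] W →ₗ[ℝ] ℝ)
    (hmsym : ∀ x y : W, m x y = m y x)
    (hmpsd : ∀ x : W, 0 ≤ m x x)
    (Wh : Submodule ℝ W) [FiniteDimensional ℝ Wh] (hWhV : Wh ≤ V)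
    (Th : Wh →ₗ[ℝ] Wh)
    (hTh : ∀ (u φ : Wh),
      ⟪((Th u : Wh) : W), (φ : W)⟫ = ⟪T ⟨(u : W), hWhV u.2⟩, (φ : W)⟫)
    (g : W →L[ℝ] ℝ) :
    (∃! p : Wh × Wh, ∀ φh ψh : Wh,
      ⟪T ⟨(p.1 : W), hWhV p.1.2⟩, (φh : W)⟫ + ⟪(p.2 : W), (φh : W)⟫ +
        m (p.2 : W) (φh : W) + ⟪(p.1 : W), (ψh : W)⟫ - m (p.2 : W) (ψh : W) =
        g (φh : W)) ∧
    ∀ p : Wh × Wh,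
      (∀ φh ψh : Wh,
        ⟪T ⟨(p.1 : W), hWhV p.1.2⟩, (φh : W)⟫ + ⟪(p.2 : W), (φh : W)⟫ +
          m (p.2 : W) (φh : W) + ⟪(p.1 : W), (ψh : W)⟫ - m (p.2 : W) (ψh : W) =
          g (φh : W)) →
      Real.sqrt (‖Th p.1‖ ^ 2 + ‖(p.1 : W)‖ ^ 2 + ‖(p.2 : W)‖ ^ 2) ≤
        (48 * Real.sqrt 2) * ‖g‖ :=
  stmt_8_general V T hT1 hT2 m hmpsd Wh hWhV Th hTh g
end

section
/- (A priori error estimate.) Assume m is bounded: |m(v,w)| ≤ M‖v‖‖w‖ for some M ≥ 0. Let g : W → ℝ be a bounded linear functional, let (u,v) ∈ V × W satisfy a(u,v;φ,ψ) = g(φ) for all (φ,ψ) ∈ W × W, and let (u_h,v_h) ∈ W_h × W_h satisfy a(u_h,v_h;φ_h,ψ_h) = g(φ_h) for all (φ_h,ψ_h) ∈ W_h × W_h. Suppose there exist z_h, w_h ∈ W_h, a constant c ≥ 0, mesh sizes h_s, h_t ∈ (0,1], integers m_s, m_t ≥ 1, and nonnegative reals A_t, A_s, B_t, B_s such that ‖u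 − z_h‖_V ≤ c(h_t^{m_t−1}·A_t + h_s^{m_s−1}·A_s) and ‖v − w_h‖ ≤ c(h_t^{m_t−1}·B_t + h_s^{m_s−1}·B_s). Then, with h := max{h_s, h_t}, there is a constant C depending only on c, M and the inf-sup constant C_s = 1/(48√2) (but not on h_s, h_t, A_t, A_s, B_t, B_s or the subspace W_h) such that ‖u − u_h‖_{V_h}² + ‖v − v_h‖² ≤ C·[h^{2m_t−2}(A_t² + B_t²) + h^{2m_s−2}(A_s² + B_s²)]. -/
open RealInnerProductSpace

set_option maxHeartbeats 2000000 in
/-- A priori error estimate: given the continuous solution `(u,v)` and the discrete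
solution `(u_h,v_h)` of the mixed space–time formulation, and approximants
`z_h, w_h ∈ W_h` satisfying the spline approximation bounds with mesh sizes
`h_s, h_t ∈ (0,1]`, there is a constant `C > 0` depending only on `c` and `M` (not on
the spaces, the mesh sizes, the Sobolev norms `A_t, A_s, B_t, B_s`, or the subspace
`W_h`) such that, with `h = max{h_s,h_t}`,
`‖u − u_h‖_{V_h}² + ‖v − v_h‖² ≤ C[h^{2m_t−2}(A_t²+B_t²) + h^{2m_s−2}(A_s²+B_s²)]`.
Here `TP : V → W` is the `W_h`-projected Riesz map, so
`‖w‖_{V_h}² = ‖TP w‖² + ‖w‖²`. -/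
theorem stmt_10 (c M : ℝ) (hc : 0 ≤ c) (hM : 0 ≤ M) :
    ∃ C : ℝ, 0 < C ∧
      ∀ (W : Type) [NormedAddCommGroup W] [InnerProductSpace ℝ W] [CompleteSpace W]
        (V : Submodule ℝ W) (T : V →ₗ[ℝ] W),
        (∀ u : V, 0 ≤ ⟪T u, (u : W)⟫) →
        (∀ u : V, ‖T u‖ ^ 2 ≤ 5 * ‖(u : W)‖ ^ 2) →
        ∀ (m : W →ₗ[ℝ] W →ₗ[ℝ] ℝ),
        (∀ x y : W, m x y = m y x) →
        (∀ x : W, 0 ≤ m x x) →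
        (∀ x y : W, |m x y| ≤ M * ‖x‖ * ‖y‖) →
        ∀ (Wh : Submodule ℝ W), FiniteDimensional ℝ Wh →
        ∀ (hWhV : Wh ≤ V) (TP : V →ₗ[ℝ] W),
        (∀ u : V, TP u ∈ Wh) →
        (∀ (u : V) (χ : Wh), ⟪TP u, (χ : W)⟫ = ⟪T u, (χ : W)⟫) →
        ∀ (g : W →L[ℝ] ℝ) (u : V) (v : W),
        (∀ φ ψ : W,
          ⟪T u, φ⟫ + ⟪v, φ⟫ + m v φ + ⟪(u : W), ψ⟫ - m v ψ = g φ) →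
        ∀ (uh vh : Wh),
        (∀ φh ψh : Wh,
          ⟪T ⟨(uh : W), hWhV uh.2⟩, (φh : W)⟫ + ⟪(vh : W), (φh : W)⟫ +
            m (vh : W) (φh : W) + ⟪(uh : W), (ψh : W)⟫ - m (vh : W) (ψh : W) =
            g (φh : W)) →
        ∀ (zh wh : Wh) (hs ht : ℝ),
        hs ∈ Set.Ioc (0 : ℝ) 1 → ht ∈ Set.Ioc (0 : ℝ) 1 →
        ∀ (ms mt : ℕ), 1 ≤ ms → 1 ≤ mt →
        ∀ (At As Bt Bs : ℝ), 0 ≤ At → 0 ≤ As → 0 ≤ Bt → 0 ≤ Bs →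
        Real.sqrt (‖T (u - ⟨(zh : W), hWhV zh.2⟩)‖ ^ 2 + ‖(u : W) - (zh : W)‖ ^ 2) ≤
          c * (ht ^ (mt - 1) * At + hs ^ (ms - 1) * As) →
        ‖v - (wh : W)‖ ≤ c * (ht ^ (mt - 1) * Bt + hs ^ (ms - 1) * Bs) →
        ‖TP (u - ⟨(uh : W), hWhV uh.2⟩)‖ ^ 2 + ‖(u : W) - (uh : W)‖ ^ 2 +
            ‖v - (vh : W)‖ ^ 2 ≤
          C * ((max hs ht) ^ (2 * mt - 2) * (At ^ 2 + Bt ^ 2) +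
            (max hs ht) ^ (2 * ms - 2) * (As ^ 2 + Bs ^ 2)) := by
  refine ⟨12 * (c ^ 2 + 1) * (38 + 20 * M) ^ 2, ?_, ?_⟩
  · have h1 : (0:ℝ) < c ^ 2 + 1 := by positivity
    have h2 : (0:ℝ) < 38 + 20 * M := by linarith
    positivity
  intro W _ _ _ V T hTpos hTb m msym mpos mB Wh _ hWhV TP hTPmem hTPeq g u v hcont uh vh
    hdisc zh wh hs ht hhs hht ms mt hms hmt At As Bt Bs hAt hAs hBt hBs hap1 hap2
  -- abbreviations
  set uhV : V := ⟨(uh : W), hWhV uh.2⟩ with huhV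
  set zhV : V := ⟨(zh : W), hWhV zh.2⟩ with hzhV
  set η : V := u - zhV with hη
  set θ : Wh := zh - uh with hθdef
  set θV : V := ⟨(θ : W), hWhV θ.2⟩ with hθV
  set σ : Wh := wh - vh with hσdef
  set ρ : W := v - (wh : W) with hρdef
  have hηW : ((η : W)) = (u : W) - (zh : W) := rfl
  have hθW : ((θ : W)) = (zh : W) - (uh : W) := rfl
  have hσW : ((σ : W)) = (wh : W) - (vh : W) := rfl
  -- Galerkin orthogonality pieces
  have galB : ∀ ψ : Wh, ⟪(u : W) - (uh : W), (ψ : W)⟫ = m ((v : W) - (vh : W)) (ψ : W) := by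
    intro ψ
    have h1 := hcont 0 (ψ : W)
    have h2 := hdisc 0 ψ
    simp only [inner_zero_right, inner_zero_left, map_zero, ZeroMemClass.coe_zero,
      LinearMap.zero_apply] at h1 h2
    have hmsub : m ((v : W) - (vh : W)) (ψ : W) = m v (ψ : W) - m (vh : W) (ψ : W) := by
      rw [map_sub]; rfl
    rw [inner_sub_left, hmsub]
    linarith
  have galA : ∀ φ : Wh,
      ⟪T (u - uhV), (φ : W)⟫ + ⟪v - (vh : W), (φ : W)⟫ + m (v - (vh : W)) (φ : W) = 0 := by
    intro φ
    have h1 := hcont (φ : W) 0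
    have h2 := hdisc φ 0
    simp only [inner_zero_right, map_zero, ZeroMemClass.coe_zero] at h1 h2
    have hmsub : m ((v : W) - (vh : W)) (φ : W) = m v (φ : W) - m (vh : W) (φ : W) := by
      rw [map_sub]; rfl
    have hTsub : T (u - uhV) = T u - T uhV := map_sub T u uhV
    rw [hTsub, inner_sub_left, inner_sub_left, hmsub]
    linarith
  -- splittings
  have hsplitV : u - uhV = η + θV := by
    apply Subtype.ext
    show (u : W) - (uh : W) = ((u : W) - (zh : W)) + ((zh : W) - (uh : W))
    abel
  have hsplitW : (u : W) - (uh : W) = (η : W) + (θ : W) := by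
    rw [hηW, hθW]; abel
  have hsplitv : v - (vh : W) = ρ + (σ : W) := by
    rw [hρdef, hσW]; abel
  -- key combined identity
  have keyC : ∀ φ : Wh,
      ⟪TP θV, (φ : W)⟫ + ⟪(σ : W), (φ : W)⟫ + ⟪(θ : W), (φ : W)⟫
        = -(⟪T η, (φ : W)⟫ + ⟪(η : W), (φ : W)⟫ + ⟪ρ, (φ : W)⟫) := by
    intro φ
    have hA := galA φ
    have hB := galB φ
    rw [hsplitV, map_add, inner_add_left] at hA
    rw [hsplitW, inner_add_left] at hB
    rw [hsplitv, inner_add_left] at hA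
    rw [hsplitv] at hB
    have hmadd : m (ρ + (σ : W)) (φ : W) = m ρ (φ : W) + m (σ : W) (φ : W) := by
      rw [map_add]; rfl
    rw [hmadd] at hA hB
    have hTP : ⟪T θV, (φ : W)⟫ = ⟪TP θV, (φ : W)⟫ := (hTPeq θV φ).symm
    rw [hTP] at hA
    linarith [hA, hB]
  -- basic Cauchy-Schwarz helpers
  have cs : ∀ a b : W, |⟪a, b⟫| ≤ ‖a‖ * ‖b‖ := fun a b => abs_real_inner_le_norm a b
  have hxnn : (0:ℝ) ≤ ‖(θ : W)‖ := norm_nonneg _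
  have hsnn : (0:ℝ) ≤ ‖(σ : W)‖ := norm_nonneg _
  -- TP is a contraction relative to T
  have hTP_le : ∀ xv : V, ‖TP xv‖ ≤ ‖T xv‖ := by
    intro xv
    have h1 : ⟪TP xv, TP xv⟫ = ⟪T xv, TP xv⟫ := hTPeq xv ⟨TP xv, hTPmem xv⟩
    have h2 : ‖TP xv‖ * ‖TP xv‖ ≤ ‖T xv‖ * ‖TP xv‖ := by
      rw [← real_inner_self_eq_norm_mul_norm, h1]
      exact real_inner_le_norm _ _
    rcases (norm_nonneg (TP xv)).eq_or_lt with h | h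
    · rw [← h]; exact norm_nonneg _
    · exact le_of_mul_le_mul_right h2 h
  have hcoeθV : ((θV : W)) = (θ : W) := rfl
  have hTθ : ‖T θV‖ ≤ 3 * ‖(θ : W)‖ := by
    have h5 := hTb θV
    rw [hcoeθV] at h5
    nlinarith only [h5, norm_nonneg (T θV), hxnn]
  have hpθ : ‖TP θV‖ ≤ 3 * ‖(θ : W)‖ := le_trans (hTP_le θV) hTθ
  -- lower bound for ⟪θ, σ⟫ (from equation B tested with σ)
  have estθσ : -(‖(η : W)‖ * ‖(σ : W)‖ + M * ‖ρ‖ * ‖(σ : W)‖) ≤ ⟪(θ : W), (σ : W)⟫ := by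
    have hB := galB σ
    rw [hsplitW, inner_add_left, hsplitv] at hB
    have hmadd : m (ρ + (σ : W)) ((σ : W)) = m ρ ((σ : W)) + m (σ : W) ((σ : W)) := by
      rw [map_add]; rfl
    rw [hmadd] at hB
    have h1 : -(M * ‖ρ‖ * ‖(σ : W)‖) ≤ m ρ ((σ : W)) := by
      have ha := mB ρ ((σ : W))
      have hb := neg_abs_le (m ρ ((σ : W)))
      linarith
    have h2 : 0 ≤ m (σ : W) ((σ : W)) := mpos _
    have h3 := (abs_le.mp (cs ((η : W)) ((σ : W)))).2
    linarith
  -- keyC tested with θ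
  have hpos1 : 0 ≤ ⟪TP θV, (θ : W)⟫ := by
    rw [hTPeq θV θ]
    exact hTpos θV
  have ineq1 : ⟪(σ : W), (θ : W)⟫ + ‖(θ : W)‖ ^ 2
      ≤ ‖T η‖ * ‖(θ : W)‖ + ‖(η : W)‖ * ‖(θ : W)‖ + ‖ρ‖ * ‖(θ : W)‖ := by
    have hk := keyC θ
    have e1 : ⟪(θ : W), (θ : W)⟫ = ‖(θ : W)‖ ^ 2 := real_inner_self_eq_norm_sq _
    have b1 := (abs_le.mp (cs (T η) ((θ : W)))).1
    have b2 := (abs_le.mp (cs ((η : W)) ((θ : W)))).1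
    have b3 := (abs_le.mp (cs ρ ((θ : W)))).1
    linarith
  -- keyC tested with σ
  have ineq2 : ‖(σ : W)‖ ^ 2 ≤ ‖T η‖ * ‖(σ : W)‖ + ‖(η : W)‖ * ‖(σ : W)‖ + ‖ρ‖ * ‖(σ : W)‖
      + ‖TP θV‖ * ‖(σ : W)‖ + ‖(θ : W)‖ * ‖(σ : W)‖ := by
    have hk := keyC σ
    have e1 : ⟪(σ : W), (σ : W)⟫ = ‖(σ : W)‖ ^ 2 := real_inner_self_eq_norm_sq _
    have b1 := (abs_le.mp (cs (T η) ((σ : W)))).1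
    have b2 := (abs_le.mp (cs ((η : W)) ((σ : W)))).1
    have b3 := (abs_le.mp (cs ρ ((σ : W)))).1
    have b4 := (abs_le.mp (cs (TP θV) ((σ : W)))).1
    have b5 := (abs_le.mp (cs ((θ : W)) ((σ : W)))).1
    linarith
  -- norm abbreviations as plain reals
  have hTηnn : (0:ℝ) ≤ ‖T η‖ := norm_nonneg _
  have hηnn : (0:ℝ) ≤ ‖(η : W)‖ := norm_nonneg _
  have hρnn : (0:ℝ) ≤ ‖ρ‖ := norm_nonneg _
  -- bound on σ
  have hsb : ‖(σ : W)‖ ≤ (‖T η‖ + ‖(η : W)‖ + ‖ρ‖) + 4 * ‖(θ : W)‖ := by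
    rcases hsnn.eq_or_lt with h | h
    · rw [← h]; positivity
    · have h2 : ‖(σ : W)‖ * ‖(σ : W)‖
          ≤ ((‖T η‖ + ‖(η : W)‖ + ‖ρ‖) + 4 * ‖(θ : W)‖) * ‖(σ : W)‖ := by
        nlinarith only [mul_le_mul_of_nonneg_right hpθ hsnn, ineq2, hsnn]
      exact le_of_mul_le_mul_right h2 h
  -- quadratic bound on θ
  have hθI : ‖(θ : W)‖ ^ 2 ≤ (‖T η‖ + ‖(η : W)‖ + ‖ρ‖) * ‖(θ : W)‖
      + (‖(η : W)‖ + M * ‖ρ‖) * ‖(σ : W)‖ := by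
    have hco : ⟪(σ : W), (θ : W)⟫ = ⟪(θ : W), (σ : W)⟫ := real_inner_comm _ _
    nlinarith only [ineq1, estθσ, hco]
  have hMρ : (0:ℝ) ≤ M * ‖ρ‖ := mul_nonneg hM hρnn
  have hxb : ‖(θ : W)‖ ≤ 2 * (‖T η‖ + ‖(η : W)‖ + ‖ρ‖) + 5 * (‖(η : W)‖ + M * ‖ρ‖) := by
    have hRHnn : (0:ℝ) ≤ ‖T η‖ + ‖(η : W)‖ + ‖ρ‖ := by linarith
    have hRGnn : (0:ℝ) ≤ ‖(η : W)‖ + M * ‖ρ‖ := by linarith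
    have hq : ‖(θ : W)‖ ^ 2 ≤ (‖T η‖ + ‖(η : W)‖ + ‖ρ‖) * ‖(θ : W)‖
        + (‖(η : W)‖ + M * ‖ρ‖) * ((‖T η‖ + ‖(η : W)‖ + ‖ρ‖) + 4 * ‖(θ : W)‖) := by
      nlinarith only [mul_le_mul_of_nonneg_left hsb hRGnn, hθI]
    nlinarith only [hq, hxnn, hRHnn, hRGnn, mul_nonneg hRHnn hRGnn, sq_nonneg (‖(η : W)‖ + M * ‖ρ‖)]
  -- approximation bounds
  set E : ℝ := c * (ht ^ (mt - 1) * At + hs ^ (ms - 1) * As) with hE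
  set F : ℝ := c * (ht ^ (mt - 1) * Bt + hs ^ (ms - 1) * Bs) with hF
  have hEnn : 0 ≤ E := le_trans (Real.sqrt_nonneg _) hap1
  have hFnn : 0 ≤ F := le_trans (norm_nonneg _) hap2
  have hTηE : ‖T η‖ ≤ E := by
    have h1 : ‖T η‖ ^ 2 ≤ ‖T η‖ ^ 2 + ‖(u : W) - (zh : W)‖ ^ 2 :=
      le_add_of_nonneg_right (sq_nonneg _)
    have h2 := Real.sqrt_le_sqrt h1
    rw [Real.sqrt_sq (norm_nonneg _)] at h2
    exact le_trans h2 hap1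
  have hηE : ‖(η : W)‖ ≤ E := by
    have h1 : ‖(η : W)‖ ^ 2 ≤ ‖T η‖ ^ 2 + ‖(u : W) - (zh : W)‖ ^ 2 := by
      rw [hηW]; exact le_add_of_nonneg_left (sq_nonneg _)
    have h2 := Real.sqrt_le_sqrt h1
    rw [Real.sqrt_sq (norm_nonneg _)] at h2
    exact le_trans h2 hap1
  have hρF : ‖ρ‖ ≤ F := hap2
  have hMρF : M * ‖ρ‖ ≤ M * F := mul_le_mul_of_nonneg_left hρF hM
  have hMEnn : 0 ≤ M * E := mul_nonneg hM hEnn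
  have hMFnn : 0 ≤ M * F := mul_nonneg hM hFnn
  -- bounds on the three error norms
  have hTPsplit : TP (u - uhV) = TP η + TP θV := by rw [hsplitV, map_add]
  have ha1 : ‖TP (u - uhV)‖ ≤ ‖T η‖ + ‖TP θV‖ := by
    rw [hTPsplit]
    exact le_trans (norm_add_le _ _) (by linarith [hTP_le η])
  have ha2 : ‖(u : W) - (uh : W)‖ ≤ ‖(η : W)‖ + ‖(θ : W)‖ := by
    rw [hsplitW]; exact norm_add_le _ _
  have ha3 : ‖v - (vh : W)‖ ≤ ‖ρ‖ + ‖(σ : W)‖ := by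
    rw [hsplitv]; exact norm_add_le _ _
  have hexp : (38 + 20 * M) * (E + F)
      = 38 * E + 38 * F + 20 * (M * E) + 20 * (M * F) := by ring
  have hb1 : ‖TP (u - uhV)‖ ≤ (38 + 20 * M) * (E + F) := by
    rw [hexp]
    linarith only [ha1, hpθ, hxb, hTηE, hηE, hρF, hMρF, hMEnn, hMFnn, hEnn, hFnn]
  have hb2 : ‖(u : W) - (uh : W)‖ ≤ (38 + 20 * M) * (E + F) := by
    rw [hexp]
    linarith only [ha2, hxb, hTηE, hηE, hρF, hMρF, hMEnn, hMFnn, hEnn, hFnn]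
  have hb3 : ‖v - (vh : W)‖ ≤ (38 + 20 * M) * (E + F) := by
    rw [hexp]
    linarith only [ha3, hsb, hxb, hTηE, hηE, hρF, hMρF, hMEnn, hMFnn, hEnn, hFnn]
  have hQnn : 0 ≤ (38 + 20 * M) * (E + F) := by positivity
  have hsum : ‖TP (u - uhV)‖ ^ 2 + ‖(u : W) - (uh : W)‖ ^ 2 + ‖v - (vh : W)‖ ^ 2
      ≤ 3 * ((38 + 20 * M) * (E + F)) ^ 2 := by
    nlinarith only [hb1, hb2, hb3, norm_nonneg (TP (u - uhV)),
      norm_nonneg ((u : W) - (uh : W)), norm_nonneg (v - (vh : W)), hQnn]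
  -- mesh size comparison
  have hhmt : ht ^ (mt - 1) ≤ (max hs ht) ^ (mt - 1) :=
    pow_le_pow_left₀ hht.1.le (le_max_right hs ht) _
  have hhms : hs ^ (ms - 1) ≤ (max hs ht) ^ (ms - 1) :=
    pow_le_pow_left₀ hhs.1.le (le_max_left hs ht) _
  have hhtnn : (0:ℝ) ≤ ht ^ (mt - 1) := pow_nonneg hht.1.le _
  have hhsnn : (0:ℝ) ≤ hs ^ (ms - 1) := pow_nonneg hhs.1.le _
  have hEF : E + F ≤ c * ((max hs ht) ^ (mt - 1) * (At + Bt)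
      + (max hs ht) ^ (ms - 1) * (As + Bs)) := by
    rw [hE, hF]
    nlinarith only [mul_nonneg (mul_nonneg hc (sub_nonneg.mpr hhmt)) (add_nonneg hAt hBt),
      mul_nonneg (mul_nonneg hc (sub_nonneg.mpr hhms)) (add_nonneg hAs hBs)]
  have e1 : (max hs ht) ^ (2 * mt - 2) = ((max hs ht) ^ (mt - 1)) ^ 2 := by
    rw [← pow_mul]
    congr 1
    omega
  have e2 : (max hs ht) ^ (2 * ms - 2) = ((max hs ht) ^ (ms - 1)) ^ 2 := by
    rw [← pow_mul]
    congr 1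
    omega
  have hEFnn : 0 ≤ E + F := by linarith
  have hEF2 : (E + F) ^ 2 ≤ 4 * (c ^ 2 + 1) *
      ((max hs ht) ^ (2 * mt - 2) * (At ^ 2 + Bt ^ 2)
        + (max hs ht) ^ (2 * ms - 2) * (As ^ 2 + Bs ^ 2)) := by
    rw [e1, e2]
    have hsq : (E + F) ^ 2 ≤ (c * ((max hs ht) ^ (mt - 1) * (At + Bt)
        + (max hs ht) ^ (ms - 1) * (As + Bs))) ^ 2 := by
      have h := mul_self_le_mul_self hEFnn hEF
      nlinarith only [h]
    have hPnn : (0:ℝ) ≤ (max hs ht) ^ (mt - 1) := pow_nonneg (le_trans hhs.1.le (le_max_left _ _)) _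
    have hQnn' : (0:ℝ) ≤ (max hs ht) ^ (ms - 1) := pow_nonneg (le_trans hhs.1.le (le_max_left _ _)) _
    nlinarith only [hsq, sq_nonneg c,
      mul_nonneg (mul_nonneg (sq_nonneg c) (sq_nonneg ((max hs ht) ^ (mt - 1)))) (sq_nonneg (At - Bt)),
      mul_nonneg (mul_nonneg (sq_nonneg c) (sq_nonneg ((max hs ht) ^ (ms - 1)))) (sq_nonneg (As - Bs)),
      mul_nonneg (sq_nonneg c) (sq_nonneg ((max hs ht) ^ (mt - 1) * (At + Bt)
        - (max hs ht) ^ (ms - 1) * (As + Bs))),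
      mul_nonneg (sq_nonneg ((max hs ht) ^ (mt - 1))) (add_nonneg (mul_self_nonneg At) (mul_self_nonneg Bt)),
      mul_nonneg (sq_nonneg ((max hs ht) ^ (ms - 1))) (add_nonneg (mul_self_nonneg As) (mul_self_nonneg Bs))]
  -- conclusion
  have hfin := mul_le_mul_of_nonneg_left hEF2
    (by positivity : (0:ℝ) ≤ 3 * (38 + 20 * M) ^ 2)
  nlinarith only [hsum, hfin]
end
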